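/- Let A be a bounded-complete continuous dcpo (a continuous Scott domain) with countable basis K containing ⊥, and let w : K → ℝ satisfy w(⊥) = 0, w(k) > 0 for k ≠ ⊥, and ∑_{k∈K} w(k) = 1. For x ∈ A put K_x = {k ∈ K | k ≪ x} and I_x = {k ∈ K | the pair {k, x} has no upper bound in A}; for S ⊆ K put W(S) = ∑_{k∈S} w(k). Define u(x,y) = 1 − W(K_x ∩ K_y) − W(I_x ∩ I_y) and l(x,y) = W(K_x ∩ I_y) + W(K_y ∩ I_x). Assume the basis K is regular: for every k ∈ K and every maximal element x of A, k ⊑ x implies k ≪ x. Then for all maximal elements x, y of A one has l(x,y) = u(x,y); the function μ(x,y) = l(x,y) = u(x,y) is a metric on the set Total(A) of maximal elements of A; and the metric topology of (Total(A), μ) equals the topology induced on Total(A) by the Scott topology of A. -/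

import Mathlib

/-!
For a total element `x`, regularity of the basis makes `K` the disjoint union of `K_x` and
`I_x`: a basic `k` consistent with `x` lies below `x`, hence way below it. So for total `x, y`
the four sets `K_x ∩ K_y`, `K_x ∩ I_y`, `I_x ∩ K_y`, `I_x ∩ I_y` partition `K`, which gives
`l = u`. The triangle inequality for `l` comes from splitting `K_x ∩ I_z` along `K_y ∪ I_y`,
and `l(x, y) = 0` forces every `k ≪ x` of positive weight (and `⊥`) below `y`, so `x ⊑ y`.

A basic element `k ≪ x` of positive weight is below every total `y` with `l(x, y) < w(k)`,
so Scott neighbourhoods of `x`, which contain such a `k`, contain a ball around `x`.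
Conversely, all but finitely many basic elements carry total weight `< ε / 2`, and for the
remaining ones the conditions `k ≪ y` (for `k ≪ x`) and "`k`, `y` inconsistent" (for
`k ∈ I_x`) are Scott open, by interpolation and bounded completeness; their intersection
lies in the `ε`-ball around `x`.
-/

/-- `x` is way below `y`: for every nonempty directed set `S` possessing a least
upper bound `b` with `y ≤ b`, there is `s ∈ S` with `x ≤ s`. -/
def wayBelow {α : Type*} [Preorder α] (x y : α) : Prop :=
  ∀ S : Set α, S.Nonempty → DirectedOn (· ≤ ·) S → ∀ b : α, IsLUB S b → y ≤ b → ∃ s ∈ S, x ≤ s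

/-- A directed complete partial order: every directed subset (including `∅`,
so there is a least element) has a least upper bound. -/
def IsDcpo (α : Type*) [Preorder α] : Prop :=
  ∀ S : Set α, DirectedOn (· ≤ ·) S → ∃ b, IsLUB S b

/-- Bounded completeness: every subset with an upper bound has a least upper bound. -/
def BoundedComplete (α : Type*) [Preorder α] : Prop :=
  ∀ S : Set α, (∃ b, ∀ s ∈ S, s ≤ b) → ∃ m, IsLUB S m

/-- Algebraicity: for every element `a`, the set of compact elements below `a` is
(nonempty and) directed with least upper bound `a`. -/
def IsAlgebraicDom (α : Type*) [Preorder α] : Prop :=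
  ∀ a : α, ({k : α | wayBelow k k ∧ k ≤ a}).Nonempty ∧
    DirectedOn (· ≤ ·) {k : α | wayBelow k k ∧ k ≤ a} ∧
    IsLUB {k : α | wayBelow k k ∧ k ≤ a} a

/-- `K` is a basis of a continuous dcpo: for every `a`, the set of elements of `K`
way below `a` is (nonempty and) directed with least upper bound `a`. -/
def IsDomBasis {α : Type*} [Preorder α] (K : Set α) : Prop :=
  ∀ a : α, ({k ∈ K | wayBelow k a}).Nonempty ∧
    DirectedOn (· ≤ ·) {k ∈ K | wayBelow k a} ∧
    IsLUB {k ∈ K | wayBelow k a} a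

/-- Scott open sets: upper sets inaccessible by least upper bounds of nonempty
directed sets. -/
def ScottOpen {α : Type*} [Preorder α] (U : Set α) : Prop :=
  (∀ x ∈ U, ∀ y, x ≤ y → y ∈ U) ∧
  ∀ S : Set α, S.Nonempty → DirectedOn (· ≤ ·) S → ∀ b : α, IsLUB S b → b ∈ U → ∃ s ∈ S, s ∈ U

/-- Interior in the Scott topology: the largest Scott open subset. -/
def scottInt {α : Type*} [Preorder α] (B : Set α) : Set α :=
  ⋃₀ {U : Set α | ScottOpen U ∧ U ⊆ B}

/-- Negative information about `x`: the elements inconsistent with `x`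
(the pair has no upper bound). -/
def negSet {α : Type*} [Preorder α] (x : α) : Set α :=
  {y | ¬∃ b, x ≤ b ∧ y ≤ b}

/-- `J_x = {y | x ∈ Int (I_y)}`, the continuous approximation of `I_x = negSet x`. -/
def jSet {α : Type*} [Preorder α] (x : α) : Set α :=
  {y | x ∈ scottInt (negSet y)}

/-- The set of total (maximal) elements. -/
def TotalElems (α : Type*) [Preorder α] : Set α := {x | ∀ y, x ≤ y → y = x}

/-- The weight of a set of elements: the sum of the weights of its members. -/
noncomputable def Wt {α : Type*} (w : α → ℝ) (S : Set α) : ℝ :=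
  ∑' k : S, w (k : α)

/-- The basic elements way below `x`. -/
def basisBelow {α : Type*} [Preorder α] (K : Set α) (x : α) : Set α :=
  {k ∈ K | wayBelow k x}

/-- The basic elements inconsistent with `x` (no common upper bound). -/
def basisIncons {α : Type*} [Preorder α] (K : Set α) (x : α) : Set α :=
  {k ∈ K | ¬∃ b, k ≤ b ∧ x ≤ b}

open Set Topology

section Domain

variable {α : Type*} [Preorder α] {K : Set α} {k x y : α}

theorem wayBelow.le (h : wayBelow x y) : x ≤ y := by
  obtain ⟨s, hs, hxs⟩ := h {y} (singleton_nonempty y) (directedOn_singleton y) y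
    isLUB_singleton le_rfl
  rwa [mem_singleton_iff.mp hs] at hxs

theorem wayBelow.trans_le {z : α} (h : wayBelow x y) (hyz : y ≤ z) : wayBelow x z :=
  fun S hS hdir b hb hzb => h S hS hdir b hb (hyz.trans hzb)

theorem wayBelow_of_le_of_wayBelow {z : α} (hxy : x ≤ y) (h : wayBelow y z) : wayBelow x z :=
  fun S hS hdir b hb hzb =>
    let ⟨s, hs, hys⟩ := h S hS hdir b hb hzb
    ⟨s, hs, hxy.trans hys⟩

/-- Interpolation: `y` is the directed supremum of `{m ∈ K | ∃ m' ∈ K, m ≪ m' ≪ y}`. -/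
theorem IsDomBasis.exists_wayBelow_wayBelow (hK : IsDomBasis K) (h : wayBelow k y) :
    ∃ m ∈ K, wayBelow k m ∧ wayBelow m y := by
  set D := {m ∈ K | ∃ m' ∈ K, wayBelow m m' ∧ wayBelow m' y}
  have hD : D.Nonempty := by
    obtain ⟨m', hm'K, hm'y⟩ := (hK y).1
    obtain ⟨m, hmK, hmm'⟩ := (hK m').1
    exact ⟨m, hmK, m', hm'K, hmm', hm'y⟩
  have hdir : DirectedOn (· ≤ ·) D := by
    rintro m₁ ⟨hm₁, m₁', hm₁', h₁, h₁y⟩ m₂ ⟨hm₂, m₂', hm₂', h₂, h₂y⟩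
    obtain ⟨m', ⟨hm', hm'y⟩, hle₁, hle₂⟩ :=
      (hK y).2.1 m₁' ⟨hm₁', h₁y⟩ m₂' ⟨hm₂', h₂y⟩
    obtain ⟨m, ⟨hm, hmm'⟩, hm₁m, hm₂m⟩ :=
      (hK m').2.1 m₁ ⟨hm₁, h₁.trans_le hle₁⟩ m₂ ⟨hm₂, h₂.trans_le hle₂⟩
    exact ⟨m, ⟨hm, m', hm', hmm', hm'y⟩, hm₁m, hm₂m⟩
  have hlub : IsLUB D y := by
    refine ⟨fun m ⟨_, m', _, hmm', hm'y⟩ => hmm'.le.trans hm'y.le, fun c hc => ?_⟩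
    refine (hK y).2.2.2 fun m' ⟨hm', hm'y⟩ => (hK m').2.2.2 fun m ⟨hm, hmm'⟩ => ?_
    exact hc ⟨hm, m', hm', hmm', hm'y⟩
  obtain ⟨m, ⟨-, m', hm', hmm', hm'y⟩, hkm⟩ := h D hD hdir y hlub le_rfl
  exact ⟨m', hm', wayBelow_of_le_of_wayBelow hkm hmm', hm'y⟩

/-- The joins `k ⊔ s`, `s ∈ S`, form a directed set whose supremum bounds `k` and `b`. -/
theorem exists_ge_ge_of_isLUB (hd : IsDcpo α) (hb : BoundedComplete α) {S : Set α}
    (hS : S.Nonempty) (hdir : DirectedOn (· ≤ ·) S) {b : α} (hSb : IsLUB S b)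
    (h : ∀ s ∈ S, ∃ c, k ≤ c ∧ s ≤ c) : ∃ c, k ≤ c ∧ b ≤ c := by
  have hpair : ∀ s ∈ S, ∃ c, IsLUB {k, s} c := fun s hs =>
    let ⟨c, hkc, hsc⟩ := h s hs
    hb {k, s} ⟨c, by rintro t (rfl | rfl) <;> assumption⟩
  set T := {c | ∃ s ∈ S, IsLUB {k, s} c}
  have hTdir : DirectedOn (· ≤ ·) T := by
    rintro c₁ ⟨s₁, hs₁, hc₁⟩ c₂ ⟨s₂, hs₂, hc₂⟩
    obtain ⟨s, hs, hs₁s, hs₂s⟩ := hdir s₁ hs₁ s₂ hs₂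
    obtain ⟨c, hc⟩ := hpair s hs
    have hkc : k ≤ c := hc.1 (mem_insert k _)
    have hsc : s ≤ c := hc.1 (mem_insert_of_mem k rfl)
    refine ⟨c, ⟨s, hs, hc⟩, hc₁.2 ?_, hc₂.2 ?_⟩ <;> rintro t (rfl | rfl)
    exacts [hkc, hs₁s.trans hsc, hkc, hs₂s.trans hsc]
  obtain ⟨c, hTc⟩ := hd T hTdir
  obtain ⟨s₀, hs₀⟩ := hS
  obtain ⟨c₀, hc₀⟩ := hpair s₀ hs₀
  refine ⟨c, (hc₀.1 (mem_insert k _)).trans (hTc.1 ⟨s₀, hs₀, hc₀⟩),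
    hSb.2 fun s hs => ?_⟩
  obtain ⟨cs, hcs⟩ := hpair s hs
  exact (hcs.1 (mem_insert_of_mem k rfl)).trans (hTc.1 ⟨s, hs, hcs⟩)

section ScottTopology

variable [TopologicalSpace α] [IsScott α univ]

theorem scottOpen_iff_isOpen {U : Set α} : ScottOpen U ↔ IsOpen U := by
  rw [IsScott.isOpen_iff_isUpperSet_and_dirSupInaccOn (D := univ), dirSupInaccOn_univ]
  exact and_congr ⟨fun h x y hxy hx => h x hx y hxy, fun h x hx y hxy => h hxy hx⟩
    ⟨fun h d hd hdir b hb hbU => h d hd hdir b hb hbU,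
      fun h S hS hdir b hb hbU => h hS hdir hb hbU⟩

theorem IsOpen.exists_mem_basisBelow (hK : IsDomBasis K) {U : Set α} (hU : IsOpen U)
    (hx : x ∈ U) : ∃ k ∈ basisBelow K x, k ∈ U :=
  (scottOpen_iff_isOpen.mpr hU).2 _ (hK x).1 (hK x).2.1 x (hK x).2.2 hx

theorem isOpen_setOf_wayBelow (hK : IsDomBasis K) (k : α) : IsOpen {y | wayBelow k y} := by
  refine scottOpen_iff_isOpen.mp
    ⟨fun y hy z hyz => hy.trans_le hyz, fun S hS hdir b hb hkb => ?_⟩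
  obtain ⟨m, -, hkm, hmb⟩ := hK.exists_wayBelow_wayBelow hkb
  obtain ⟨s, hs, hms⟩ := hmb S hS hdir b hb le_rfl
  exact ⟨s, hs, hkm.trans_le hms⟩

theorem isOpen_negSet (hd : IsDcpo α) (hb : BoundedComplete α) (k : α) : IsOpen (negSet k) := by
  refine scottOpen_iff_isOpen.mp
    ⟨fun y hy z hyz ⟨c, hkc, hzc⟩ => hy ⟨c, hkc, hyz.trans hzc⟩,
      fun S hS hdir b hSb hb' => ?_⟩
  by_contra! h
  exact hb' (exists_ge_ge_of_isLUB hd hb hS hdir hSb fun s hs => not_not.mp (h s hs))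

end ScottTopology

end Domain

section Weight

variable {α : Type*} {g : α → ℝ} {S T : Set α}

theorem Wt_indicator_of_subset {K : Set α} (w : α → ℝ) (hS : S ⊆ K) :
    Wt (K.indicator w) S = Wt w S :=
  tsum_congr fun k => indicator_of_mem (hS k.2) w

theorem Wt_nonneg (hg0 : 0 ≤ g) (S : Set α) : 0 ≤ Wt g S :=
  tsum_nonneg fun k => hg0 k

theorem Wt_empty (g : α → ℝ) : Wt g ∅ = 0 :=
  tsum_empty

theorem Wt_union_of_disjoint (hg : Summable g) (h : Disjoint S T) :
    Wt g (S ∪ T) = Wt g S + Wt g T :=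
  Summable.tsum_union_disjoint h (hg.subtype _) (hg.subtype _)

theorem Wt_mono (hg : Summable g) (hg0 : 0 ≤ g) (h : S ⊆ T) : Wt g S ≤ Wt g T :=
  (hg.subtype _).tsum_le_tsum_of_inj (inclusion h) (inclusion_injective h)
    (fun k _ => hg0 k) (fun _ => le_rfl) (hg.subtype _)

theorem le_Wt_of_mem (hg : Summable g) (hg0 : 0 ≤ g) {k : α} (hk : k ∈ S) : g k ≤ Wt g S :=
  (hg.subtype _).le_tsum ⟨k, hk⟩ fun j _ => hg0 j

theorem Wt_union_le (hg : Summable g) (hg0 : 0 ≤ g) (S T : Set α) :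
    Wt g (S ∪ T) ≤ Wt g S + Wt g T := by
  rw [← union_sdiff_self, Wt_union_of_disjoint hg disjoint_sdiff_right]
  gcongr
  exact Wt_mono hg hg0 sdiff_subset

theorem Wt_le_add_of_subset_union (hg : Summable g) (hg0 : 0 ≤ g) {R : Set α}
    (h : R ⊆ S ∪ T) : Wt g R ≤ Wt g S + Wt g T :=
  (Wt_mono hg hg0 h).trans (Wt_union_le hg hg0 S T)

theorem exists_finset_Wt_compl_lt (g : α → ℝ) {ε : ℝ} (hε : 0 < ε) :
    ∃ F : Finset α, Wt g (↑F)ᶜ < ε :=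
  ((tendsto_tsum_compl_atTop_zero g).eventually (gt_mem_nhds hε)).exists

end Weight

section Metric

variable {α : Type*} [Preorder α] {K S : Set α} {g : α → ℝ} {bot k x y z : α}

def IsRegularBasis (K : Set α) : Prop :=
  ∀ k ∈ K, ∀ x ∈ TotalElems α, k ≤ x → wayBelow k x

noncomputable def lowerDist (K : Set α) (g : α → ℝ) (x y : α) : ℝ :=
  Wt g (basisBelow K x ∩ basisIncons K y) + Wt g (basisBelow K y ∩ basisIncons K x)

noncomputable def upperDist (K : Set α) (g : α → ℝ) (x y : α) : ℝ :=
  1 - Wt g (basisBelow K x ∩ basisBelow K y) - Wt g (basisIncons K x ∩ basisIncons K y)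

theorem basisBelow_subset (K : Set α) (x : α) : basisBelow K x ⊆ K :=
  sep_subset K _

theorem basisIncons_subset (K : Set α) (x : α) : basisIncons K x ⊆ K :=
  sep_subset K _

theorem lowerDist_indicator (K : Set α) (w : α → ℝ) (x y : α) :
    lowerDist K (K.indicator w) x y = lowerDist K w x y := by
  rw [lowerDist, lowerDist,
    Wt_indicator_of_subset w (inter_subset_left.trans (basisBelow_subset K x)),
    Wt_indicator_of_subset w (inter_subset_left.trans (basisBelow_subset K y))]

theorem upperDist_indicator (K : Set α) (w : α → ℝ) (x y : α) :
    upperDist K (K.indicator w) x y = upperDist K w x y := by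
  rw [upperDist, upperDist,
    Wt_indicator_of_subset w (inter_subset_left.trans (basisBelow_subset K x)),
    Wt_indicator_of_subset w (inter_subset_left.trans (basisIncons_subset K x))]

theorem le_of_notMem_basisIncons (hx : x ∈ TotalElems α) (hk : k ∈ K)
    (h : k ∉ basisIncons K x) : k ≤ x := by
  obtain ⟨b, hkb, hxb⟩ := not_not.mp fun hn => h ⟨hk, hn⟩
  exact hx b hxb ▸ hkb

theorem basisBelow_union_basisIncons (hreg : IsRegularBasis K) (hx : x ∈ TotalElems α) :
    basisBelow K x ∪ basisIncons K x = K := by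
  refine Subset.antisymm (union_subset (basisBelow_subset K x) (basisIncons_subset K x))
    fun k hk => ?_
  by_cases hI : k ∈ basisIncons K x
  · exact Or.inr hI
  · exact Or.inl ⟨hk, hreg k hk x hx (le_of_notMem_basisIncons hx hk hI)⟩

theorem disjoint_basisBelow_basisIncons (K : Set α) (x : α) :
    Disjoint (basisBelow K x) (basisIncons K x) :=
  disjoint_left.mpr fun _ ⟨_, hkx⟩ ⟨_, hn⟩ => hn ⟨x, hkx.le, le_rfl⟩

theorem Wt_inter_basisBelow_add_Wt_inter_basisIncons (hg : Summable g) (hreg : IsRegularBasis K)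
    (hx : x ∈ TotalElems α) (hS : S ⊆ K) :
    Wt g (S ∩ basisBelow K x) + Wt g (S ∩ basisIncons K x) = Wt g S := by
  rw [← Wt_union_of_disjoint hg ((disjoint_basisBelow_basisIncons K x).mono inter_subset_right
    inter_subset_right), ← inter_union_distrib_left, basisBelow_union_basisIncons hreg hx,
    inter_eq_left.mpr hS]

theorem lowerDist_eq_upperDist (hg : Summable g) (hgK : Wt g K = 1) (hreg : IsRegularBasis K)
    (hx : x ∈ TotalElems α) (hy : y ∈ TotalElems α) :
    lowerDist K g x y = upperDist K g x y := by
  have hK := Wt_inter_basisBelow_add_Wt_inter_basisIncons hg hreg hx (subset_refl K)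
  have hKx := Wt_inter_basisBelow_add_Wt_inter_basisIncons hg hreg hy (basisBelow_subset K x)
  have hIx := Wt_inter_basisBelow_add_Wt_inter_basisIncons hg hreg hy (basisIncons_subset K x)
  rw [inter_eq_right.mpr (basisBelow_subset K x), inter_eq_right.mpr (basisIncons_subset K x)]
    at hK
  rw [lowerDist, upperDist, inter_comm (basisBelow K y)]
  linarith

theorem lowerDist_nonneg (hg0 : 0 ≤ g) (K : Set α) (x y : α) : 0 ≤ lowerDist K g x y :=
  add_nonneg (Wt_nonneg hg0 _) (Wt_nonneg hg0 _)

theorem lowerDist_comm (K : Set α) (g : α → ℝ) (x y : α) :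
    lowerDist K g x y = lowerDist K g y x :=
  add_comm _ _

theorem lowerDist_self (K : Set α) (g : α → ℝ) (x : α) : lowerDist K g x x = 0 := by
  rw [lowerDist, (disjoint_basisBelow_basisIncons K x).inter_eq, Wt_empty, add_zero]

theorem lowerDist_triangle (hg : Summable g) (hg0 : 0 ≤ g) (hreg : IsRegularBasis K)
    (hy : y ∈ TotalElems α) : lowerDist K g x z ≤ lowerDist K g x y + lowerDist K g y z := by
  have hsplit : ∀ a c, basisBelow K a ∩ basisIncons K c ⊆
      (basisBelow K a ∩ basisIncons K y) ∪ (basisBelow K y ∩ basisIncons K c) := by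
    rintro a c k ⟨hka, hkc⟩
    rcases (basisBelow_union_basisIncons hreg hy).symm ▸ hka.1 with hky | hky
    · exact Or.inr ⟨hky, hkc⟩
    · exact Or.inl ⟨hka, hky⟩
  have h₁ := Wt_le_add_of_subset_union hg hg0 (hsplit x z)
  have h₂ := Wt_le_add_of_subset_union hg hg0 (hsplit z x)
  simp only [lowerDist]
  linarith

theorem exists_pos_forall_lowerDist_lt_imp_le (hg : Summable g) (hg0 : 0 ≤ g) (hbot : IsBot bot)
    (hpos : ∀ k ∈ K, k ≠ bot → 0 < g k) (hk : k ∈ basisBelow K x) :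
    ∃ ε > 0, ∀ y ∈ TotalElems α, lowerDist K g x y < ε → k ≤ y := by
  rcases eq_or_ne k bot with rfl | hne
  · exact ⟨1, one_pos, fun y _ _ => hbot y⟩
  refine ⟨g k, hpos k hk.1 hne, fun y hy hlt => le_of_notMem_basisIncons hy hk.1 fun hkI => ?_⟩
  have := le_Wt_of_mem hg hg0 (S := basisBelow K x ∩ basisIncons K y) ⟨hk, hkI⟩
  have := Wt_nonneg hg0 (basisBelow K y ∩ basisIncons K x)
  rw [lowerDist] at hlt
  linarith

theorem lowerDist_eq_zero_iff (hg : Summable g) (hg0 : 0 ≤ g) (hK : IsDomBasis K)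
    (hbot : IsBot bot) (hpos : ∀ k ∈ K, k ≠ bot → 0 < g k)
    (hx : x ∈ TotalElems α) (hy : y ∈ TotalElems α) : lowerDist K g x y = 0 ↔ x = y := by
  refine ⟨fun h0 => ?_, fun hxy => hxy ▸ lowerDist_self K g x⟩
  have hxy : x ≤ y := (hK x).2.2.2 fun k hk => by
    obtain ⟨ε, hε, hle⟩ := exists_pos_forall_lowerDist_lt_imp_le hg hg0 hbot hpos hk
    exact hle y hy (h0 ▸ hε)
  exact (hx y hxy).symm

end Metric

theorem exists_isOpen_inter_eq_of_forall_mem {X : Type*} [TopologicalSpace X] {T P : Set X}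
    (hTP : T ⊆ P) (h : ∀ x ∈ T, ∃ V, IsOpen V ∧ x ∈ V ∧ V ∩ P ⊆ T) :
    ∃ U, IsOpen U ∧ T = U ∩ P := by
  refine ⟨⋃₀ {V | IsOpen V ∧ V ∩ P ⊆ T}, isOpen_sUnion fun V hV => hV.1,
    Subset.antisymm (fun x hx => ?_) ?_⟩
  · obtain ⟨V, hV, hxV, hVT⟩ := h x hx
    exact ⟨⟨V, ⟨hV, hVT⟩, hxV⟩, hTP hx⟩
  · rintro x ⟨⟨V, ⟨-, hVT⟩, hxV⟩, hxP⟩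
    exact hVT ⟨hxV, hxP⟩

section MetricTopology

variable {α : Type*} [Preorder α] [TopologicalSpace α] [IsScott α univ]
  {K : Set α} {g : α → ℝ} {bot x : α}

theorem exists_pos_forall_lowerDist_lt_mem (hg : Summable g) (hg0 : 0 ≤ g) (hK : IsDomBasis K)
    (hbot : IsBot bot) (hpos : ∀ k ∈ K, k ≠ bot → 0 < g k) {U : Set α} (hU : IsOpen U)
    (hx : x ∈ U) : ∃ ε > 0, ∀ y ∈ TotalElems α, lowerDist K g x y < ε → y ∈ U := by
  obtain ⟨k, hk, hkU⟩ := hU.exists_mem_basisBelow hK hx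
  obtain ⟨ε, hε, hle⟩ := exists_pos_forall_lowerDist_lt_imp_le hg hg0 hbot hpos hk
  exact ⟨ε, hε, fun y hy hlt =>
    IsScott.isUpperSet_of_isOpen (D := univ) hU (hle y hy hlt) hkU⟩

theorem exists_isOpen_forall_lowerDist_lt (hg : Summable g) (hg0 : 0 ≤ g) (hd : IsDcpo α)
    (hb : BoundedComplete α) (hK : IsDomBasis K) (x : α) {ε : ℝ} (hε : 0 < ε) :
    ∃ V, IsOpen V ∧ x ∈ V ∧ ∀ y ∈ V, lowerDist K g x y < ε := by
  obtain ⟨F, hF⟩ := exists_finset_Wt_compl_lt g (half_pos hε)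
  refine ⟨(⋂ k ∈ (↑F ∩ basisBelow K x), {y | wayBelow k y}) ∩
      ⋂ k ∈ (↑F ∩ basisIncons K x), negSet k, ?_, ?_, fun y hy => ?_⟩
  · exact ((F.finite_toSet.inter_of_left _).isOpen_biInter fun k _ =>
      isOpen_setOf_wayBelow hK k).inter
      ((F.finite_toSet.inter_of_left _).isOpen_biInter fun k _ => isOpen_negSet hd hb k)
  · exact ⟨mem_iInter₂.mpr fun k hk => hk.2.2, mem_iInter₂.mpr fun k hk => hk.2.2⟩
  have h₁ : basisBelow K x ∩ basisIncons K y ⊆ (↑F)ᶜ := fun k ⟨hkx, hky⟩ hkF =>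
    hky.2 ⟨y, (mem_iInter₂.mp hy.1 k ⟨hkF, hkx⟩).le, le_rfl⟩
  have h₂ : basisBelow K y ∩ basisIncons K x ⊆ (↑F)ᶜ := fun k ⟨hky, hkx⟩ hkF =>
    mem_iInter₂.mp hy.2 k ⟨hkF, hkx⟩ ⟨y, hky.2.le, le_rfl⟩
  have := Wt_mono hg hg0 h₁
  have := Wt_mono hg hg0 h₂
  rw [lowerDist]
  linarith

theorem exists_isOpen_inter_totalElems_eq_iff (hg : Summable g) (hg0 : 0 ≤ g) (hd : IsDcpo α)
    (hb : BoundedComplete α) (hK : IsDomBasis K) (hbot : IsBot bot)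
    (hpos : ∀ k ∈ K, k ≠ bot → 0 < g k) {T : Set α} (hT : T ⊆ TotalElems α) :
    (∃ U, IsOpen U ∧ T = U ∩ TotalElems α) ↔
      ∀ x ∈ T, ∃ ε : ℝ, 0 < ε ∧
        {y ∈ TotalElems α | lowerDist K g x y < ε} ⊆ T := by
  constructor
  · rintro ⟨U, hU, rfl⟩ x ⟨hxU, -⟩
    obtain ⟨ε, hε, hball⟩ := exists_pos_forall_lowerDist_lt_mem hg hg0 hK hbot hpos hU hxU
    exact ⟨ε, hε, fun y ⟨hy, hxy⟩ => ⟨hball y hy hxy, hy⟩⟩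
  · refine fun h => exists_isOpen_inter_eq_of_forall_mem hT fun x hx => ?_
    obtain ⟨ε, hε, hball⟩ := h x hx
    obtain ⟨V, hV, hxV, hVε⟩ := exists_isOpen_forall_lowerDist_lt hg hg0 hd hb hK x hε
    exact ⟨V, hV, hxV, fun y ⟨hyV, hy⟩ => hball ⟨hy, hVε y hyV⟩⟩

end MetricTopology

theorem stmt12_general {α : Type*} [PartialOrder α]
    (hd : IsDcpo α) (hb : BoundedComplete α)
    (K : Set α) (hK : IsDomBasis K)
    (bot : α) (hbot : ∀ a : α, bot ≤ a)
    (w : α → ℝ) (hw0 : w bot = 0) (hwpos : ∀ k ∈ K, k ≠ bot → 0 < w k)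
    (hsum : Summable fun k : K => w (k : α))
    (hsum1 : ∑' k : K, w (k : α) = 1)
    (hreg : ∀ k ∈ K, ∀ x ∈ TotalElems α, k ≤ x → wayBelow k x)
    (u l : α → α → ℝ)
    (hu : ∀ x y : α, u x y =
      1 - Wt w (basisBelow K x ∩ basisBelow K y) - Wt w (basisIncons K x ∩ basisIncons K y))
    (hl : ∀ x y : α, l x y =
      Wt w (basisBelow K x ∩ basisIncons K y) + Wt w (basisBelow K y ∩ basisIncons K x)) :
    -- l = u on total elements
    (∀ x ∈ TotalElems α, ∀ y ∈ TotalElems α, l x y = u x y) ∧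
    -- μ = l = u is a metric on Total(A)
    (∀ x ∈ TotalElems α, ∀ y ∈ TotalElems α, 0 ≤ u x y) ∧
    (∀ x ∈ TotalElems α, ∀ y ∈ TotalElems α, (u x y = 0 ↔ x = y)) ∧
    (∀ x ∈ TotalElems α, ∀ y ∈ TotalElems α, u x y = u y x) ∧
    (∀ x ∈ TotalElems α, ∀ y ∈ TotalElems α, ∀ z ∈ TotalElems α,
      u x z ≤ u x y + u y z) ∧
    -- the metric topology on Total(A) is the subspace topology induced by
    -- the Scott topology
    (∀ T : Set α, T ⊆ TotalElems α →
      ((∃ U : Set α, ScottOpen U ∧ T = U ∩ TotalElems α) ↔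
        (∀ x ∈ T, ∃ ε : ℝ, 0 < ε ∧ {y ∈ TotalElems α | u x y < ε} ⊆ T))) := by
  let _ : TopologicalSpace α := Topology.scott α univ
  have _ : IsScott α univ := ⟨rfl⟩
  set g := K.indicator w
  have hg : Summable g := summable_subtype_iff_indicator.mp hsum
  have hg0 : 0 ≤ g := indicator_nonneg fun k hk => by
    rcases eq_or_ne k bot with rfl | hne
    exacts [hw0.ge, (hwpos k hk hne).le]
  have hpos : ∀ k ∈ K, k ≠ bot → 0 < g k := fun k hk hne => by
    simpa only [g, indicator_of_mem hk] using hwpos k hk hne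
  have hgK : Wt g K = 1 := (Wt_indicator_of_subset w subset_rfl).trans hsum1
  have hlg : ∀ x y, l x y = lowerDist K g x y := fun x y =>
    (hl x y).trans (lowerDist_indicator K w x y).symm
  have hug : ∀ x ∈ TotalElems α, ∀ y ∈ TotalElems α, u x y = lowerDist K g x y :=
    fun x hx y hy => by
      rw [hu, ← upperDist, ← upperDist_indicator, lowerDist_eq_upperDist hg hgK hreg hx hy]
  refine ⟨fun x hx y hy => by rw [hlg, hug x hx y hy], fun x hx y hy => ?_, fun x hx y hy => ?_,
    fun x hx y hy => ?_, fun x hx y hy z hz => ?_, fun T hT => ?_⟩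
  · exact hug x hx y hy ▸ lowerDist_nonneg hg0 K x y
  · exact hug x hx y hy ▸ lowerDist_eq_zero_iff hg hg0 hK hbot hpos hx hy
  · rw [hug x hx y hy, hug y hy x hx, lowerDist_comm]
  · rw [hug x hx z hz, hug x hx y hy, hug y hy z hz]
    exact lowerDist_triangle hg hg0 hreg hy
  · simp_rw [scottOpen_iff_isOpen,
      exists_isOpen_inter_totalElems_eq_iff hg hg0 hd hb hK hbot hpos hT]
    refine forall₂_congr fun x hx => exists_congr fun ε => and_congr_right fun _ => ?_
    have hball :
        {y ∈ TotalElems α | u x y < ε} = {y ∈ TotalElems α | lowerDist K g x y < ε} :=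
      sep_ext_iff.mpr fun y hy => by rw [hug x (hT hx) y hy]
    rw [hball]

/-- with `u(x,y) = 1 − W(K_x ∩ K_y) − W(I_x ∩ I_y)` and
`l(x,y) = W(K_x ∩ I_y) + W(K_y ∩ I_x)` on a bounded complete continuous dcpo with
a regular countable basis, `l = u` on maximal elements, `μ = l = u` is a metric on
`Total(A)`, and its metric topology is the topology induced by the Scott topology. -/
theorem stmt12 {α : Type*} [PartialOrder α]
    (hd : IsDcpo α) (hb : BoundedComplete α)
    (K : Set α) (hKc : K.Countable) (hK : IsDomBasis K)
    (bot : α) (hbot : ∀ a : α, bot ≤ a) (hbotK : bot ∈ K)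
    (w : α → ℝ) (hw0 : w bot = 0) (hwpos : ∀ k ∈ K, k ≠ bot → 0 < w k)
    (hsum : Summable fun k : K => w (k : α))
    (hsum1 : ∑' k : K, w (k : α) = 1)
    (hreg : ∀ k ∈ K, ∀ x ∈ TotalElems α, k ≤ x → wayBelow k x)
    (u l : α → α → ℝ)
    (hu : ∀ x y : α, u x y =
      1 - Wt w (basisBelow K x ∩ basisBelow K y) - Wt w (basisIncons K x ∩ basisIncons K y))
    (hl : ∀ x y : α, l x y =
      Wt w (basisBelow K x ∩ basisIncons K y) + Wt w (basisBelow K y ∩ basisIncons K x)) :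
    -- l = u on total elements
    (∀ x ∈ TotalElems α, ∀ y ∈ TotalElems α, l x y = u x y) ∧
    -- μ = l = u is a metric on Total(A)
    (∀ x ∈ TotalElems α, ∀ y ∈ TotalElems α, 0 ≤ u x y) ∧
    (∀ x ∈ TotalElems α, ∀ y ∈ TotalElems α, (u x y = 0 ↔ x = y)) ∧
    (∀ x ∈ TotalElems α, ∀ y ∈ TotalElems α, u x y = u y x) ∧
    (∀ x ∈ TotalElems α, ∀ y ∈ TotalElems α, ∀ z ∈ TotalElems α,
      u x z ≤ u x y + u y z) ∧
    -- the metric topology on Total(A) is the subspace topology induced by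
    -- the Scott topology
    (∀ T : Set α, T ⊆ TotalElems α →
      ((∃ U : Set α, ScottOpen U ∧ T = U ∩ TotalElems α) ↔
        (∀ x ∈ T, ∃ ε : ℝ, 0 < ε ∧ {y ∈ TotalElems α | u x y < ε} ⊆ T))) :=
  stmt12_general hd hb K hK bot hbot w hw0 hwpos hsum hsum1 hreg u l hu hl
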